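/- arXiv:0907.3268 — 2 statements merged into one kernel-verified Lean document; each statement's English description precedes it below -/
import Mathlib

section
/- Let σ be a state-operator on a BL-algebra A. If σ(x → y) = σ(x) → σ(y) holds for all x, y ∈ A, then σ(x ⊙ y) = σ(x) ⊙ σ(y) holds for all x, y ∈ A; consequently σ is a BL-endomorphism of A. -/
/-- A BL-algebra: a bounded lattice with a commutative monoid operation `mul` (⊙, with unit ⊤)
and a residuum `imp` (→) satisfying residuation, divisibility and prelinearity.
The constants 0 and 1 of the BL-algebra are `⊥` and `⊤`. -/
structure BLAlgebra (α : Type*) [Lattice α] [BoundedOrder α] where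
  mul : α → α → α
  imp : α → α → α
  mul_comm : ∀ a b : α, mul a b = mul b a
  mul_assoc : ∀ a b c : α, mul (mul a b) c = mul a (mul b c)
  mul_top : ∀ a : α, mul a ⊤ = a
  le_imp_iff : ∀ a b c : α, c ≤ imp a b ↔ mul a c ≤ b
  inf_eq_mul_imp : ∀ a b : α, a ⊓ b = mul a (imp a b)
  sup_imp_eq_top : ∀ a b : α, imp a b ⊔ imp b a = ⊤

namespace BLAlgebra

variable {α : Type*} [Lattice α] [BoundedOrder α]

/-- Negation `x⁻ := x → 0`. -/
def neg (A : BLAlgebra α) (x : α) : α := A.imp x ⊥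

/-- Powers: `x⁰ = 1`, `xⁿ⁺¹ = xⁿ ⊙ x`. -/
def pow (A : BLAlgebra α) (x : α) : ℕ → α
  | 0 => ⊤
  | n + 1 => A.mul (A.pow x n) x

/-- A state-operator on a BL-algebra. -/
def IsStateOperator (A : BLAlgebra α) (σ : α → α) : Prop :=
  σ ⊥ = ⊥ ∧
  (∀ x y : α, σ (A.imp x y) = A.imp (σ x) (σ (x ⊓ y))) ∧
  (∀ x y : α, σ (A.mul x y) = A.mul (σ x) (σ (A.imp x (A.mul x y)))) ∧
  (∀ x y : α, σ (A.mul (σ x) (σ y)) = A.mul (σ x) (σ y)) ∧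
  (∀ x y : α, σ (A.imp (σ x) (σ y)) = A.imp (σ x) (σ y))

/-- A strong state-operator: axioms (1), (2), (3′), (4), (5). -/
def IsStrongStateOperator (A : BLAlgebra α) (σ : α → α) : Prop :=
  σ ⊥ = ⊥ ∧
  (∀ x y : α, σ (A.imp x y) = A.imp (σ x) (σ (x ⊓ y))) ∧
  (∀ x y : α, σ (A.mul x y) = A.mul (σ x) (σ (A.neg x ⊔ y))) ∧
  (∀ x y : α, σ (A.mul (σ x) (σ y)) = A.mul (σ x) (σ y)) ∧
  (∀ x y : α, σ (A.imp (σ x) (σ y)) = A.imp (σ x) (σ y))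

/-- A state-morphism-operator: axioms (1), (2), (4), (5), (6). -/
def IsStateMorphismOperator (A : BLAlgebra α) (σ : α → α) : Prop :=
  σ ⊥ = ⊥ ∧
  (∀ x y : α, σ (A.imp x y) = A.imp (σ x) (σ (x ⊓ y))) ∧
  (∀ x y : α, σ (A.mul (σ x) (σ y)) = A.mul (σ x) (σ y)) ∧
  (∀ x y : α, σ (A.imp (σ x) (σ y)) = A.imp (σ x) (σ y)) ∧
  (∀ x y : α, σ (A.mul x y) = A.mul (σ x) (σ y))

/-- A filter of a BL-algebra: nonempty, closed under ⊙, upward closed. -/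
def IsFilter (A : BLAlgebra α) (F : Set α) : Prop :=
  F.Nonempty ∧ (∀ x ∈ F, ∀ y ∈ F, A.mul x y ∈ F) ∧ ∀ x ∈ F, ∀ y : α, x ≤ y → y ∈ F

/-- A filter of the subalgebra carried by the subset `S`. -/
def IsFilterOn (A : BLAlgebra α) (S F : Set α) : Prop :=
  F ⊆ S ∧ F.Nonempty ∧ (∀ x ∈ F, ∀ y ∈ F, A.mul x y ∈ F) ∧
    ∀ x ∈ F, ∀ y ∈ S, x ≤ y → y ∈ F

/-- A state-filter of `(A, σ)`: a filter closed under `σ`. -/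
def IsStateFilter (A : BLAlgebra α) (σ : α → α) (F : Set α) : Prop :=
  A.IsFilter F ∧ ∀ x ∈ F, σ x ∈ F

/-- A maximal filter: a proper filter not properly contained in any proper filter. -/
def IsMaximalFilter (A : BLAlgebra α) (F : Set α) : Prop :=
  A.IsFilter F ∧ F ≠ Set.univ ∧
    ∀ G : Set α, A.IsFilter G → G ≠ Set.univ → F ⊆ G → F = G

/-- A maximal filter of the subalgebra carried by `S`. -/
def IsMaximalFilterOn (A : BLAlgebra α) (S F : Set α) : Prop :=
  A.IsFilterOn S F ∧ F ≠ S ∧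
    ∀ G : Set α, A.IsFilterOn S G → G ≠ S → F ⊆ G → F = G

/-- A maximal state-filter of `(A, σ)`. -/
def IsMaximalStateFilter (A : BLAlgebra α) (σ : α → α) (F : Set α) : Prop :=
  A.IsStateFilter σ F ∧ F ≠ Set.univ ∧
    ∀ G : Set α, A.IsStateFilter σ G → G ≠ Set.univ → F ⊆ G → F = G

/-- The radical: the intersection of all maximal filters. -/
def Rad (A : BLAlgebra α) : Set α :=
  {x : α | ∀ F : Set α, A.IsMaximalFilter F → x ∈ F}

/-- The radical of the subalgebra carried by `S`. -/
def RadOn (A : BLAlgebra α) (S : Set α) : Set α :=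
  {x : α | x ∈ S ∧ ∀ F : Set α, A.IsMaximalFilterOn S F → x ∈ F}

/-- The kernel of a state-operator. -/
def Ker (_A : BLAlgebra α) (σ : α → α) : Set α := {x : α | σ x = ⊤}

end BLAlgebra

section Aux

variable {α : Type*} [Lattice α] [BoundedOrder α] (A : BLAlgebra α)

lemma BL_imp_eq_top_iff {a b : α} : A.imp a b = ⊤ ↔ a ≤ b := by
  rw [← top_le_iff, A.le_imp_iff, A.mul_top]

lemma BL_imp_self (a : α) : A.imp a a = ⊤ := (BL_imp_eq_top_iff A).mpr le_rfl

lemma BL_mul_le_left (a b : α) : A.mul a b ≤ a := by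
  rw [← A.le_imp_iff a a b, BL_imp_self]; exact le_top

lemma BL_mul_imp_le (a b : α) : A.mul a (A.imp a b) ≤ b :=
  (A.le_imp_iff a b _).mp le_rfl

lemma BL_mul_mono_right {b c : α} (a : α) (h : b ≤ c) : A.mul a b ≤ A.mul a c := by
  rw [← A.le_imp_iff] at *
  exact h.trans ((A.le_imp_iff _ _ _).mpr le_rfl)

lemma BL_mul_sup (a b c : α) : A.mul a (b ⊔ c) = A.mul a b ⊔ A.mul a c := by
  apply le_antisymm
  · rw [← A.le_imp_iff]
    exact sup_le ((A.le_imp_iff _ _ _).mpr le_sup_left)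
      ((A.le_imp_iff _ _ _).mpr le_sup_right)
  · exact sup_le (BL_mul_mono_right A a le_sup_left) (BL_mul_mono_right A a le_sup_right)

lemma BL_mul_le_right (a b : α) : A.mul a b ≤ b := by
  rw [A.mul_comm]; exact BL_mul_le_left A b a

lemma BL_curry (a b c : α) : A.imp (A.mul a b) c = A.imp a (A.imp b c) := by
  apply le_antisymm
  · rw [A.le_imp_iff, A.le_imp_iff, ← A.mul_assoc, A.mul_comm b a]
    exact BL_mul_imp_le A _ _
  · rw [A.le_imp_iff, A.mul_comm a b, A.mul_assoc]
    exact le_trans (BL_mul_mono_right A b (BL_mul_imp_le A _ _)) (BL_mul_imp_le A _ _)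

end Aux

/-- a state-operator preserving → also preserves ⊙, and is a
BL-endomorphism (it preserves ∧, ∨, ⊙, →, 0 and 1). -/
theorem stateOperator_imp_preserving_is_endomorphism {α : Type*} [Lattice α] [BoundedOrder α]
    (A : BLAlgebra α) (σ : α → α) (hσ : A.IsStateOperator σ)
    (himp : ∀ x y : α, σ (A.imp x y) = A.imp (σ x) (σ y)) :
    (∀ x y : α, σ (A.mul x y) = A.mul (σ x) (σ y)) ∧
    (∀ x y : α, σ (x ⊓ y) = σ x ⊓ σ y) ∧
    (∀ x y : α, σ (x ⊔ y) = σ x ⊔ σ y) ∧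
    σ ⊥ = ⊥ ∧ σ ⊤ = ⊤ := by
  obtain ⟨h0, h2, h3, h4, h5⟩ := hσ
  have htop : σ ⊤ = ⊤ := by
    have h1 : A.imp (⊥ : α) ⊥ = ⊤ := BL_imp_self A ⊥
    have := himp ⊥ ⊥
    rw [h0, h1] at this
    exact this
  have hmono : ∀ {x y : α}, x ≤ y → σ x ≤ σ y := by
    intro x y h
    have := himp x y
    rw [(BL_imp_eq_top_iff A).mpr h, htop] at this
    exact (BL_imp_eq_top_iff A).mp this.symm
  have hmul : ∀ x y : α, σ (A.mul x y) = A.mul (σ x) (σ y) := by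
    intro x y
    have key : ∀ z : α, A.imp (σ (A.mul x y)) (σ z) = A.imp (A.mul (σ x) (σ y)) (σ z) := by
      intro z
      have e1 : σ (A.imp (A.mul x y) z) = A.imp (σ (A.mul x y)) (σ z) := himp _ _
      have e2 : σ (A.imp (A.mul x y) z) = A.imp (A.mul (σ x) (σ y)) (σ z) := by
        rw [BL_curry, himp, himp, ← BL_curry]
      rw [← e1, e2]
    apply le_antisymm
    · have := key (A.mul (σ x) (σ y))
      rw [h4 x y, BL_imp_self] at this
      exact (BL_imp_eq_top_iff A).mp this
    · have := key (A.mul x y)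
      rw [BL_imp_self] at this
      exact (BL_imp_eq_top_iff A).mp this.symm
  have hinf : ∀ x y : α, σ (x ⊓ y) = σ x ⊓ σ y := by
    intro x y
    rw [A.inf_eq_mul_imp, hmul, himp, ← A.inf_eq_mul_imp]
  have hsup : ∀ x y : α, σ (x ⊔ y) = σ x ⊔ σ y := by
    intro x y
    apply le_antisymm
    · have hxy : x ⊔ y ≤ A.imp (A.imp x y) y := by
        rw [A.le_imp_iff, BL_mul_sup]
        exact sup_le (by rw [A.mul_comm]; exact BL_mul_imp_le A x y) (BL_mul_le_right A _ _)
      have hyx : x ⊔ y ≤ A.imp (A.imp y x) x := by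
        rw [A.le_imp_iff, BL_mul_sup]
        exact sup_le (BL_mul_le_right A _ _) (by rw [A.mul_comm]; exact BL_mul_imp_le A y x)
      have s1 : σ (x ⊔ y) ≤ A.imp (A.imp (σ x) (σ y)) (σ y) := by
        have := hmono hxy; rwa [himp, himp] at this
      have s2 : σ (x ⊔ y) ≤ A.imp (A.imp (σ y) (σ x)) (σ x) := by
        have := hmono hyx; rwa [himp, himp] at this
      calc σ (x ⊔ y) = A.mul (σ (x ⊔ y)) (A.imp (σ x) (σ y) ⊔ A.imp (σ y) (σ x)) := by
            rw [A.sup_imp_eq_top, A.mul_top]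
        _ = A.mul (σ (x ⊔ y)) (A.imp (σ x) (σ y)) ⊔
              A.mul (σ (x ⊔ y)) (A.imp (σ y) (σ x)) := BL_mul_sup A _ _ _
        _ ≤ σ x ⊔ σ y := by
            apply sup_le
            · refine le_trans ?_ (le_sup_right (a := σ x))
              calc A.mul (σ (x ⊔ y)) (A.imp (σ x) (σ y))
                  ≤ A.mul (A.imp (A.imp (σ x) (σ y)) (σ y)) (A.imp (σ x) (σ y)) := by
                    rw [A.mul_comm, A.mul_comm (A.imp (A.imp (σ x) (σ y)) (σ y))]
                    exact BL_mul_mono_right A _ s1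
                _ ≤ σ y := by rw [A.mul_comm]; exact BL_mul_imp_le A _ _
            · refine le_trans ?_ (le_sup_left (b := σ y))
              calc A.mul (σ (x ⊔ y)) (A.imp (σ y) (σ x))
                  ≤ A.mul (A.imp (A.imp (σ y) (σ x)) (σ x)) (A.imp (σ y) (σ x)) := by
                    rw [A.mul_comm, A.mul_comm (A.imp (A.imp (σ y) (σ x)) (σ x))]
                    exact BL_mul_mono_right A _ s2
                _ ≤ σ x := by rw [A.mul_comm]; exact BL_mul_imp_le A _ _
    · exact sup_le (hmono le_sup_left) (hmono le_sup_right)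
  exact ⟨hmul, hinf, hsup, h0, htop⟩
end

section
/- Every state-operator σ on a linearly ordered BL-algebra A preserves both ⊙ and → (i.e., σ(x ⊙ y) = σ(x) ⊙ σ(y) and σ(x → y) = σ(x) → σ(y) for all x, y ∈ A), and hence σ is a BL-endomorphism of A satisfying σ ∘ σ = σ. -/
section Aux

namespace BLAlgebra

variable {α : Type*} [Lattice α] [BoundedOrder α] (A : BLAlgebra α)

lemma aux_top_mul (a : α) : A.mul ⊤ a = a := by
  rw [A.mul_comm]; exact A.mul_top a

lemma aux_mul_mono_right {b c : α} (a : α) (h : b ≤ c) :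
    A.mul a b ≤ A.mul a c := by
  have h1 : c ≤ A.imp a (A.mul a c) := (A.le_imp_iff _ _ _).mpr le_rfl
  exact (A.le_imp_iff _ _ _).mp (le_trans h h1)

lemma aux_mul_mono_left {a b : α} (h : a ≤ b) (c : α) :
    A.mul a c ≤ A.mul b c := by
  rw [A.mul_comm a c, A.mul_comm b c]; exact A.aux_mul_mono_right c h

lemma aux_mul_le_left (a b : α) : A.mul a b ≤ a := by
  calc A.mul a b ≤ A.mul a ⊤ := A.aux_mul_mono_right a le_top
  _ = a := A.mul_top a

lemma aux_imp_eq_top {a b : α} (h : a ≤ b) : A.imp a b = ⊤ := by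
  refine le_antisymm le_top ((A.le_imp_iff _ _ _).mpr ?_)
  rw [A.mul_top]; exact h

lemma aux_top_imp (b : α) : A.imp ⊤ b = b := by
  refine le_antisymm ?_ ((A.le_imp_iff _ _ _).mpr (by rw [A.aux_top_mul]))
  have h : A.mul ⊤ (A.imp ⊤ b) ≤ b := (A.le_imp_iff _ _ _).mp le_rfl
  rwa [A.aux_top_mul] at h

lemma aux_mul_mul_mul_comm (a b c d : α) :
    A.mul (A.mul a b) (A.mul c d) = A.mul (A.mul a c) (A.mul b d) := by
  rw [A.mul_assoc, ← A.mul_assoc b c d, A.mul_comm b c, A.mul_assoc c b d,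
    ← A.mul_assoc]

end BLAlgebra

end Aux

/-- every state-operator on a linearly ordered BL-algebra preserves ⊙ and →,
hence is a BL-endomorphism with σ ∘ σ = σ. -/
theorem linear_stateOperator_endomorphism {α : Type*} [Lattice α] [BoundedOrder α]
    (A : BLAlgebra α) (hlin : ∀ x y : α, x ≤ y ∨ y ≤ x)
    (σ : α → α) (hσ : A.IsStateOperator σ) :
    (∀ x y : α, σ (A.mul x y) = A.mul (σ x) (σ y)) ∧
    (∀ x y : α, σ (A.imp x y) = A.imp (σ x) (σ y)) ∧
    (∀ x y : α, σ (x ⊓ y) = σ x ⊓ σ y) ∧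
    (∀ x y : α, σ (x ⊔ y) = σ x ⊔ σ y) ∧
    σ ⊥ = ⊥ ∧ σ ⊤ = ⊤ ∧ σ ∘ σ = σ := by
  obtain ⟨hz, h2, h3, h4, h5⟩ := hσ
  -- σ ⊤ = ⊤
  have htop : σ ⊤ = ⊤ := by
    have h := h2 (⊤ : α) ⊤
    rw [A.aux_imp_eq_top le_rfl, inf_idem] at h
    rw [h, A.aux_imp_eq_top le_rfl]
  -- monotonicity
  have hmono : ∀ x y : α, x ≤ y → σ x ≤ σ y := by
    intro x y hxy
    have hle : A.mul y (A.imp y x) = x := by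
      rw [← A.inf_eq_mul_imp]; exact inf_eq_right.mpr hxy
    have h := h3 y (A.imp y x)
    rw [hle] at h
    rw [h]; exact A.aux_mul_le_left _ _
  -- idempotence
  have hidem : ∀ x : α, σ (σ x) = σ x := by
    intro x
    have h := h4 x ⊤
    rwa [htop, A.mul_top] at h
  -- imp preservation
  have himp : ∀ x y : α, σ (A.imp x y) = A.imp (σ x) (σ y) := by
    intro x y
    rcases hlin x y with h | h
    · rw [A.aux_imp_eq_top h, htop, A.aux_imp_eq_top (hmono x y h)]
    · have hxy : x ⊓ y = y := inf_eq_right.mpr h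
      rw [h2 x y, hxy]
  -- inf preservation
  have hinf : ∀ x y : α, σ (x ⊓ y) = σ x ⊓ σ y := by
    intro x y
    rcases hlin x y with h | h
    · rw [inf_eq_left.mpr h, inf_eq_left.mpr (hmono x y h)]
    · rw [inf_eq_right.mpr h, inf_eq_right.mpr (hmono y x h)]
  -- sup preservation
  have hsup : ∀ x y : α, σ (x ⊔ y) = σ x ⊔ σ y := by
    intro x y
    rcases hlin x y with h | h
    · rw [sup_eq_right.mpr h, sup_eq_right.mpr (hmono x y h)]
    · rw [sup_eq_left.mpr h, sup_eq_left.mpr (hmono y x h)]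
  -- σ(x⊙y) ≥ σx ⊙ σy
  have hmulge : ∀ x y : α, A.mul (σ x) (σ y) ≤ σ (A.mul x y) := by
    intro x y
    rw [h3 x y]
    exact A.aux_mul_mono_right _ (hmono _ _ ((A.le_imp_iff _ _ _).mpr le_rfl))
  -- σ(x⊙y) ≤ σx ⊙ σy
  have hmulle : ∀ x y : α, σ (A.mul x y) ≤ A.mul (σ x) (σ y) := by
    intro x y
    set u : α := A.imp x (σ x) ⊓ A.imp (σ x) x with hu
    set v : α := A.imp y (σ y) ⊓ A.imp (σ y) y with hv
    have hσu : σ u = ⊤ := by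
      rw [hu, hinf, himp, himp, hidem, A.aux_imp_eq_top le_rfl, inf_idem]
    have hσv : σ v = ⊤ := by
      rw [hv, hinf, himp, himp, hidem, A.aux_imp_eq_top le_rfl, inf_idem]
    have hxu : A.mul x u ≤ σ x :=
      (A.le_imp_iff _ _ _).mp (inf_le_left : u ≤ A.imp x (σ x))
    have hyv : A.mul y v ≤ σ y :=
      (A.le_imp_iff _ _ _).mp (inf_le_left : v ≤ A.imp y (σ y))
    have hσuv : σ (A.mul u v) = ⊤ := by
      refine le_antisymm le_top ?_
      have h := hmulge u v
      rwa [hσu, hσv, A.mul_top] at h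
    have hkey : A.mul (A.mul u v) (A.mul x y) ≤ A.mul (σ x) (σ y) := by
      rw [A.mul_comm, A.aux_mul_mul_mul_comm]
      calc A.mul (A.mul x u) (A.mul y v) ≤ A.mul (σ x) (A.mul y v) :=
            A.aux_mul_mono_left hxu _
        _ ≤ A.mul (σ x) (σ y) := A.aux_mul_mono_right _ hyv
    have hxy_le : A.mul x y ≤ A.imp (A.mul u v) (A.mul (σ x) (σ y)) :=
      (A.le_imp_iff _ _ _).mpr hkey
    calc σ (A.mul x y) ≤ σ (A.imp (A.mul u v) (A.mul (σ x) (σ y))) :=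
          hmono _ _ hxy_le
      _ = A.imp (σ (A.mul u v)) (σ (A.mul (σ x) (σ y))) := himp _ _
      _ = A.mul (σ x) (σ y) := by rw [hσuv, h4, A.aux_top_imp]
  refine ⟨fun x y => le_antisymm (hmulle x y) (hmulge x y), himp, hinf, hsup,
    hz, htop, funext hidem⟩
end
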